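/- Fix a configuration X₀ ∈ 𝒮 and k ∈ ℕ such that k ≤ ∑_{j∈ℤ} X₀(j). Then the total number R_k of children (over all times) of the k-th rightmost ball of X₀ in the IBM(μ) satisfies E(R_k) ≤ ∑_{ℓ=k}^∞ μ(ℓ)/μ({1,...,ℓ}) < ∞, with the convention 0/0 = 0 when μ({1,...,ℓ}) = 0. -/

import Mathlib

open MeasureTheory ProbabilityTheory Filter Set
open scoped ENNReal Topology Classical

noncomputable section

/-- A configuration of balls: the number of balls (in `ℤ₊ ∪ {∞}`) in each bin. -/
abbrev Config := ℤ → ℕ∞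

/-- A valid configuration: the support is nonempty and bounded above. -/
def IsConfig (X : Config) : Prop :=
  (∃ j, X j ≠ 0) ∧ ∃ M : ℤ, ∀ j, X j ≠ 0 → j ≤ M

/-- `tailSum X j = ∑_{i ≥ j} X i`. -/
def tailSum (X : Config) (j : ℤ) : ℕ∞ :=
  ⨆ m : ℤ, ∑ i ∈ Finset.Icc j m, X i

/-- One step of the infinite-bin model dynamics: `Phi ξ X` adds one ball to the bin
immediately to the right of the bin containing the `ξ`-th rightmost ball of `X`
(i.e. to bin `B(X,ξ) + 1` where `B(X,ξ) = sup {j : ∑_{i ≥ j} X i ≥ ξ}`), and does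
nothing when `B(X,ξ) = -∞`, i.e. when no bin `j` satisfies `∑_{i ≥ j} X i ≥ ξ`. -/
def Phi (ξ : ℕ) (X : Config) : Config := fun j =>
  X j + (if (ξ : ℕ∞) ≤ tailSum X (j - 1) ∧ ¬ (ξ : ℕ∞) ≤ tailSum X j then 1 else 0)

/-- The infinite-bin model driven by the sequence `ξ`, started from `X₀`:
`X_{n+1} = Phi (ξ n) X_n`. -/
def ibm (X₀ : Config) (ξ : ℕ → ℕ) : ℕ → Config
  | 0 => X₀
  | n + 1 => Phi (ξ n) (ibm X₀ ξ n)

/-- `X_∞(k)`: the limit (= supremum, by monotonicity) of the number of balls in bin `k`. -/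
def ibmLimit (X₀ : Config) (ξ : ℕ → ℕ) (k : ℤ) : ℕ∞ :=
  ⨆ n, ibm X₀ ξ n k

/-- `ξ` is a sequence of i.i.d. random variables with law `μ` on `(Ω, P)`. -/
def IsIIDSeq {Ω : Type*} [MeasurableSpace Ω] (P : Measure Ω) (μ : Measure ℕ)
    (ξ : ℕ → Ω → ℕ) : Prop :=
  (∀ n, Measurable (ξ n)) ∧
    iIndepFun ξ P ∧ ∀ n, P.map (ξ n) = μ

/-- The barrier configuration `X̂₀`: an infinite bin at `0`, all other bins empty. -/
def barrier : Config := fun j => if j = 0 then ⊤ else 0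

/-- The tail `μ̄(j) = μ({j, j+1, ...})` of a distribution on `ℕ`. -/
def tailμ (μ : Measure ℕ) (j : ℕ) : ℝ≥0∞ := μ {i | j ≤ i}

/-- `μ` (represented by the i.i.d. driving sequence `ξ` on `(Ω, P)`) is of type `d`:
almost surely, `d = inf {k ≥ 1 : X̂_∞(k) < ∞}` for the IBM started from the barrier
configuration (with `inf ∅ = ∞` in `ℕ ∪ {∞}`). -/
def IsTypeOf {Ω : Type*} [MeasurableSpace Ω] (P : Measure Ω) (ξ : ℕ → Ω → ℕ)
    (d : ℕ∞) : Prop :=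
  ∀ᵐ ω ∂P, sInf {k : ℕ∞ | ∃ m : ℕ, 1 ≤ m ∧ k = (m : ℕ∞) ∧
    ibmLimit barrier (fun i => ξ i ω) (m : ℤ) < ⊤} = d

/-- `δ ∈ ℤ ∪ {-∞}` is the position `δ(X) = sup {j : X j = ∞}` of the rightmost
infinite bin ("barrier") of `X`, with `sup ∅ = -∞ = ⊥`. -/
def IsRightmostBarrier (X : Config) (δ : WithBot ℤ) : Prop :=
  (∀ j : ℤ, X j = ⊤ → (j : WithBot ℤ) ≤ δ) ∧
    (∀ j : ℤ, (j : WithBot ℤ) ≤ δ → ∃ i : ℤ, j ≤ i ∧ X i = ⊤)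

end

/-- A ball is added when `Phi ξ` is applied to `X`, i.e. `B(X, ξ) > -∞`. -/
noncomputable def ballAdded (X : Config) (ξ : ℕ) : Prop := ∃ j : ℤ, (ξ : ℕ∞) ≤ tailSum X j

/-- The rank, in the new configuration `Phi ξ X`, of the ball added to `X` by `Phi ξ`:
it is placed on top of bin `J = B(X,ξ) + 1` and receives rank `∑_{i ≥ J} X i + 1`.
(When no ball is added this `iSup` over an empty type is `0`, an unused junk value.) -/
noncomputable def newRank (X : Config) (ξ : ℕ) : ℕ∞ :=
  ⨆ j : {j : ℤ // (ξ : ℕ∞) ≤ tailSum X (j - 1) ∧ ¬ (ξ : ℕ∞) ≤ tailSum X j},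
    tailSum X (j : ℤ) + 1

/-- The rank at time `n` of the ball which is the `k`-th rightmost ball of `X₀`: each ball
keeps its location and height, and its rank increases by `1` exactly when a ball with a
smaller or equal rank is added. -/
noncomputable def rankProc (X₀ : Config) (k : ℕ) (ξ : ℕ → ℕ) : ℕ → ℕ∞
  | 0 => (k : ℕ∞)
  | n + 1 =>
      if ballAdded (ibm X₀ ξ n) (ξ n) ∧ newRank (ibm X₀ ξ n) (ξ n) ≤ rankProc X₀ k ξ n
      then rankProc X₀ k ξ n + 1 else rankProc X₀ k ξ n

/-- The total number of children, over all times, of the `k`-th rightmost ball of `X₀`: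
the ball added at time `n+1` is a child of the ball of rank `ξ n` in `X_n`. -/
noncomputable def totalChildren (X₀ : Config) (k : ℕ) (ξ : ℕ → ℕ) : ℝ≥0∞ :=
  ∑' n : ℕ, (if ballAdded (ibm X₀ ξ n) (ξ n) ∧ ((ξ n : ℕ∞) = rankProc X₀ k ξ n)
    then 1 else 0)

/-!
Fix `ℓ`. Whenever the tracked ball has rank `ℓ` and the next draw is `ξ ≤ ℓ`, a ball is added
in front of it, so its rank becomes `ℓ + 1` and never returns to `ℓ`. Hence, almost surely, at
most one time `n` has `r_n = ℓ` and `ξ_{n+1} ∈ ⟦1, ℓ⟧`. Since `r_n` is a function of the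
first `n` draws, it is independent of `ξ_{n+1}`, and taking expectations gives
`(∑ₙ P(r_n = ℓ)) μ(⟦1, ℓ⟧) ≤ 1`. A child is born at time `n + 1` only if `ξ_{n+1} = r_n`, so
`E(R_k) ≤ ∑_{ℓ ≥ k} (∑ₙ P(r_n = ℓ)) μ(ℓ) ≤ ∑_{ℓ ≥ k} μ(ℓ) / μ(⟦1, ℓ⟧)`. The last series is
finite because `μ(⟦1, ℓ⟧) ≥ μ(m)` for every `ℓ` in the support of `μ`, where `m` is the least
point of that support.
-/

open Function

lemma tailSum_antitone (X : Config) : Antitone (tailSum X) := fun _ _ h =>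
  iSup_mono fun _ => Finset.sum_le_sum_of_subset (Finset.Icc_subset_Icc_left h)

lemma tailSum_mono {X Y : Config} (h : X ≤ Y) : tailSum X ≤ tailSum Y := fun _ =>
  iSup_mono fun _ => Finset.sum_le_sum fun i _ => h i

lemma le_Phi (ξ : ℕ) (X : Config) : X ≤ Phi ξ X := fun _ => le_self_add

lemma exists_le_tailSum_of_le_iSup {X : Config} {r : ℕ} (h : (r : ℕ∞) ≤ ⨆ j, tailSum X j) :
    ∃ j, (r : ℕ∞) ≤ tailSum X j := by
  rcases Nat.eq_zero_or_pos r with rfl | hr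
  · exact ⟨0, by simp⟩
  obtain ⟨j, hj⟩ := lt_iSup_iff.mp (lt_of_lt_of_le (Nat.cast_lt.mpr (Nat.sub_lt hr one_pos)) h)
  have hj' := Order.add_one_le_of_lt hj
  rw [← Nat.cast_add_one, Nat.sub_add_cancel (Nat.one_le_iff_ne_zero.mpr hr.ne')] at hj'
  exact ⟨j, hj'⟩

lemma tailSum_eq_zero_of_upperBound {X : Config} {M j : ℤ}
    (hM : M ∈ upperBounds (support X)) (hj : M < j) : tailSum X j = 0 :=
  ENat.iSup_eq_zero.mpr fun _ => Finset.sum_eq_zero fun _ hi =>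
    notMem_support.mp fun hi' => (hM hi').not_gt (hj.trans_le (Finset.mem_Icc.mp hi).1)

lemma bddAbove_support_Phi {X : Config} (h : BddAbove (support X)) (ξ : ℕ) :
    BddAbove (support (Phi ξ X)) := by
  obtain ⟨M, hM⟩ := h
  refine ⟨M + 1, fun j hj => not_lt.mp fun hlt => hj ?_⟩
  have hX : X j = 0 := notMem_support.mp fun h' => (hM h').not_gt (by omega)
  have hprev : tailSum X (j - 1) = 0 := tailSum_eq_zero_of_upperBound hM (by omega)
  simp +contextual [Phi, hX, hprev]

lemma bddAbove_support_ibm {X₀ : Config} (h : BddAbove (support X₀)) (ξ : ℕ → ℕ) (n : ℕ) :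
    BddAbove (support (ibm X₀ ξ n)) := by
  induction n with
  | zero => exact h
  | succ n ih => exact bddAbove_support_Phi ih _

/-- `IsTargetBin X ξ J` says that `J = B(X, ξ) + 1`: the bin receiving the ball added by
`Phi ξ`. -/
def IsTargetBin (X : Config) (ξ : ℕ) (J : ℤ) : Prop :=
  (ξ : ℕ∞) ≤ tailSum X (J - 1) ∧ ¬ (ξ : ℕ∞) ≤ tailSum X J

lemma Phi_apply (ξ : ℕ) (X : Config) (j : ℤ) :
    Phi ξ X j = X j + if IsTargetBin X ξ j then 1 else 0 := by
  unfold Phi IsTargetBin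
  congr

lemma IsTargetBin.le {X : Config} {ξ : ℕ} {J J' : ℤ} (h : IsTargetBin X ξ J)
    (h' : IsTargetBin X ξ J') : J ≤ J' :=
  not_lt.mp fun hlt => h'.2 (h.1.trans (tailSum_antitone X (by omega)))

lemma IsTargetBin.unique {X : Config} {ξ : ℕ} {J J' : ℤ} (h : IsTargetBin X ξ J)
    (h' : IsTargetBin X ξ J') : J = J' :=
  le_antisymm (h.le h') (h'.le h)

lemma exists_isTargetBin {X : Config} (hX : BddAbove (support X)) {ξ : ℕ} (hξ : 1 ≤ ξ)
    (h : ballAdded X ξ) : ∃ J, IsTargetBin X ξ J := by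
  obtain ⟨M, hM⟩ := hX
  have hbdd : ∀ j, (ξ : ℕ∞) ≤ tailSum X j → j ≤ M := fun j hj => not_lt.mp fun hlt => by
    rw [tailSum_eq_zero_of_upperBound hM hlt] at hj
    exact absurd (ENat.natCast_le_natCast.mp hj) (by omega)
  obtain ⟨j, hj, hmax⟩ := Int.exists_greatest_of_bdd ⟨M, hbdd⟩ h
  exact ⟨j + 1, by simpa using hj, fun hc => absurd (hmax _ hc) (by omega)⟩

lemma newRank_le (X : Config) (ξ : ℕ) : newRank X ξ ≤ ξ :=
  iSup_le fun j => Order.add_one_le_of_lt (lt_of_not_ge j.2.2)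

lemma sum_Icc_Phi_of_isTargetBin {X : Config} {ξ : ℕ} {J j m : ℤ} (hJ : IsTargetBin X ξ J)
    (hjm : J ∈ Finset.Icc j m) :
    ∑ i ∈ Finset.Icc j m, Phi ξ X i = ∑ i ∈ Finset.Icc j m, X i + 1 := by
  simp only [Phi_apply]
  rw [Finset.sum_add_distrib,
    Finset.sum_eq_single_of_mem J hjm fun i _ hi => if_neg fun hi' => hi (hi'.unique hJ)]
  exact congrArg _ (if_pos hJ)

lemma tailSum_add_one_le_tailSum_Phi {X : Config} {ξ : ℕ} {J j : ℤ} (hJ : IsTargetBin X ξ J)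
    (hj : j ≤ J) : tailSum X j + 1 ≤ tailSum (Phi ξ X) j := by
  rw [tailSum, ENat.iSup_add]
  refine iSup_le fun m => ?_
  calc ∑ i ∈ Finset.Icc j m, X i + 1 ≤ ∑ i ∈ Finset.Icc j (max m J), X i + 1 :=
        add_le_add_left (Finset.sum_le_sum_of_subset (Finset.Icc_subset_Icc_right le_sup_left)) _
    _ = ∑ i ∈ Finset.Icc j (max m J), Phi ξ X i :=
        (sum_Icc_Phi_of_isTargetBin hJ (Finset.mem_Icc.mpr ⟨hj, le_sup_right⟩)).symm
    _ ≤ tailSum (Phi ξ X) j := le_iSup (fun m => ∑ i ∈ Finset.Icc j m, Phi ξ X i) _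

lemma dependsOn_ibm (X₀ : Config) :
    ∀ n, DependsOn (fun x : ℕ → ℕ => ibm X₀ x n) (Iio n)
  | 0 => fun _ _ _ => rfl
  | n + 1 => fun x y h => by
    have hn : ibm X₀ x n = ibm X₀ y n := dependsOn_ibm X₀ n fun i hi => h i (Nat.lt_succ_of_lt hi)
    simp only [ibm, hn, h n (Nat.lt_succ_self n)]

lemma dependsOn_rankProc (X₀ : Config) (k : ℕ) :
    ∀ n, DependsOn (fun x : ℕ → ℕ => rankProc X₀ k x n) (Iio n)
  | 0 => fun _ _ _ => rfl
  | n + 1 => fun x y h => by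
    have h' : ∀ i ∈ Iio n, x i = y i := fun i hi => h i (Nat.lt_succ_of_lt hi)
    have hr : rankProc X₀ k x n = rankProc X₀ k y n := dependsOn_rankProc X₀ k n h'
    have hn : ibm X₀ x n = ibm X₀ y n := dependsOn_ibm X₀ n h'
    simp only [rankProc, hr, hn, h n (Nat.lt_succ_self n)]

section Rank

variable {X₀ : Config} {k : ℕ} {ξ : ℕ → ℕ}

lemma rankProc_monotone : Monotone (rankProc X₀ k ξ) :=
  monotone_nat_of_le_succ fun n => by
    rw [rankProc]
    split_ifs
    exacts [le_self_add, le_rfl]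

lemma le_rankProc (n : ℕ) : (k : ℕ∞) ≤ rankProc X₀ k ξ n :=
  rankProc_monotone (Nat.zero_le n)

lemma totalChildren_le_tsum (X₀ : Config) (k : ℕ) (ξ : ℕ → ℕ) :
    totalChildren X₀ k ξ ≤
      ∑' ℓ : ℕ, ∑' n, if rankProc X₀ k ξ n = ℓ ∧ ξ n = ℓ then (1 : ℝ≥0∞) else 0 := by
  rw [totalChildren, ENNReal.tsum_comm]
  refine ENNReal.tsum_le_tsum fun n => ?_
  split_ifs with h
  · exact le_trans (by rw [if_pos ⟨h.2.symm, rfl⟩]) (ENNReal.le_tsum (ξ n))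
  · exact zero_le

variable (hX₀ : BddAbove (support X₀)) (hξ : ∀ m, 1 ≤ ξ m)
include hX₀ hξ

lemma exists_rankProc_le_tailSum (hk : ∃ j, (k : ℕ∞) ≤ tailSum X₀ j) (n : ℕ) :
    ∃ j, rankProc X₀ k ξ n ≤ tailSum (ibm X₀ ξ n) j := by
  induction n with
  | zero => exact hk
  | succ n ih =>
    obtain ⟨j, hj⟩ := ih
    rw [rankProc]
    split_ifs with hadd
    · obtain ⟨J, hJ⟩ := exists_isTargetBin (bddAbove_support_ibm hX₀ ξ n) (hξ n) hadd.1
      refine ⟨min j J, ?_⟩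
      calc rankProc X₀ k ξ n + 1 ≤ tailSum (ibm X₀ ξ n) (min j J) + 1 :=
            add_le_add_left (hj.trans (tailSum_antitone _ (min_le_left _ _))) 1
        _ ≤ tailSum (ibm X₀ ξ (n + 1)) (min j J) :=
            tailSum_add_one_le_tailSum_Phi hJ (min_le_right _ _)
    · exact ⟨j, hj.trans (tailSum_mono (le_Phi _ _) j)⟩

lemma rankProc_succ_of_le (hk : ∃ j, (k : ℕ∞) ≤ tailSum X₀ j) {n ℓ : ℕ}
    (hr : rankProc X₀ k ξ n = ℓ) (hℓ : ξ n ≤ ℓ) : rankProc X₀ k ξ (n + 1) = ℓ + 1 := by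
  obtain ⟨j, hj⟩ := exists_rankProc_le_tailSum hX₀ hξ hk n
  have hadd : ballAdded (ibm X₀ ξ n) (ξ n) := ⟨j, (Nat.cast_le.mpr hℓ).trans (hr ▸ hj)⟩
  have hnew : newRank (ibm X₀ ξ n) (ξ n) ≤ rankProc X₀ k ξ n :=
    hr ▸ (newRank_le _ _).trans (Nat.cast_le.mpr hℓ)
  rw [rankProc, if_pos ⟨hadd, hnew⟩, hr]

lemma subsingleton_rankProc_eq_and_le (hk : ∃ j, (k : ℕ∞) ≤ tailSum X₀ j) (ℓ : ℕ) :
    {n | rankProc X₀ k ξ n = ℓ ∧ ξ n ≤ ℓ}.Subsingleton := by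
  have no_return : ∀ ⦃n m⦄, rankProc X₀ k ξ n = ℓ ∧ ξ n ≤ ℓ → rankProc X₀ k ξ m = ℓ → ¬ n < m :=
    fun n m hn hm hlt => by
      have hle := rankProc_monotone (X₀ := X₀) (k := k) (ξ := ξ) (Nat.succ_le_of_lt hlt)
      rw [rankProc_succ_of_le hX₀ hξ hk hn.1 hn.2, hm] at hle
      exact absurd hle (by norm_cast; omega)
  exact fun n hn m hm =>
    le_antisymm (Nat.le_of_not_lt (no_return hm hn.1)) (Nat.le_of_not_lt (no_return hn hm.1))

end Rank

lemma Set.Subsingleton.tsum_indicator_one_le {ι : Type*} {s : Set ι} (hs : s.Subsingleton) :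
    ∑' i, s.indicator (1 : ι → ℝ≥0∞) i ≤ 1 := by
  rw [← tsum_subtype]
  simpa only [Pi.one_apply, ENNReal.tsum_set_one, ENat.toENNReal_one] using
    (ENat.toENNReal_le.mpr (Set.encard_le_one_iff.mpr fun _ _ ha hb => hs ha hb))

lemma ENNReal.mul_le_div_of_mul_le_one {a b c : ℝ≥0∞} (h : a * c ≤ 1) : a * b ≤ b / c := by
  rw [div_eq_mul_inv, mul_comm b]
  exact mul_le_mul_left (ENNReal.le_inv_iff_mul_le.mpr h) b

lemma tsum_measure_singleton_div_measure_Icc_lt_top (μ : Measure ℕ) [IsFiniteMeasure μ]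
    (hμ0 : μ {0} = 0) : ∑' ℓ, μ {ℓ} / μ (Icc 1 ℓ) < ⊤ := by
  by_cases hμ : ∃ m, μ {m} ≠ 0
  · have hm0 : Nat.find hμ ≠ 0 := fun h => Nat.find_spec hμ (h ▸ hμ0)
    have hterm : ∀ ℓ, μ {ℓ} / μ (Icc 1 ℓ) ≤ μ {ℓ} / μ {Nat.find hμ} := fun ℓ => by
      by_cases hℓ : μ {ℓ} = 0
      · simp [hℓ]
      · refine ENNReal.div_le_div_left (measure_mono (singleton_subset_iff.mpr ?_)) _
        exact ⟨Nat.one_le_iff_ne_zero.mpr hm0, Nat.find_min' hμ hℓ⟩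
    calc ∑' ℓ, μ {ℓ} / μ (Icc 1 ℓ) ≤ ∑' ℓ, μ {ℓ} / μ {Nat.find hμ} := ENNReal.tsum_le_tsum hterm
      _ = μ univ / μ {Nat.find hμ} := by
        simp_rw [div_eq_mul_inv]
        rw [ENNReal.tsum_mul_right,
          ← Measure.tsum_indicator_apply_singleton μ univ MeasurableSet.univ]
        simp
      _ < ⊤ := ENNReal.div_lt_top (measure_ne_top _ _) (Nat.find_spec hμ)
  · push Not at hμ
    simp [hμ]

lemma setOf_mem_eq_preimage_restrict {Ω β : Type*} {f : (ℕ → ℕ) → β} {n : ℕ}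
    (hf : DependsOn f (Iio n)) (ξ : ℕ → Ω → ℕ) (B : Set β) :
    {ω | f (fun i => ξ i ω) ∈ B} = (fun ω (i : Finset.range n) => ξ i ω) ⁻¹'
      {v | ∃ x, f x ∈ B ∧ ∀ i : Finset.range n, x i = v i} := by
  ext ω
  refine ⟨fun h => ⟨_, h, fun _ => rfl⟩, fun ⟨x, hx, hxv⟩ => ?_⟩
  have hfx : f x = f fun i => ξ i ω := hf fun i hi => hxv ⟨i, Finset.mem_range.mpr hi⟩
  exact (hfx ▸ hx : (f fun i => ξ i ω) ∈ B)

section Probability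

variable {Ω : Type*} [MeasurableSpace Ω] {P : Measure Ω} {μ : Measure ℕ} {ξ : ℕ → Ω → ℕ}
  {β : Type*} {f : (ℕ → ℕ) → β} {n : ℕ}

lemma measurableSet_setOf_of_dependsOn (hξ : ∀ i, Measurable (ξ i)) (hf : DependsOn f (Iio n))
    (B : Set β) : MeasurableSet {ω | f (fun i => ξ i ω) ∈ B} := by
  rw [setOf_mem_eq_preimage_restrict hf]
  exact measurable_pi_lambda (fun ω (i : Finset.range n) => ξ i ω) (fun i => hξ i) .of_discrete

lemma IsIIDSeq.measure_inter_preimage_eq_mul (hξ : IsIIDSeq P μ ξ) (hf : DependsOn f (Iio n))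
    (B : Set β) (s : Set ℕ) :
    P ({ω | f (fun i => ξ i ω) ∈ B} ∩ ξ n ⁻¹' s) = P {ω | f (fun i => ξ i ω) ∈ B} * μ s := by
  have hindep : IndepFun (fun ω (i : Finset.range n) => ξ i ω) (ξ n) P :=
    (hξ.2.1.indepFun_finset (Finset.range n) {n} (by simp) hξ.1).comp measurable_id
      (measurable_pi_apply (⟨n, Finset.mem_singleton_self n⟩ : ({n} : Finset ℕ)))
  rw [setOf_mem_eq_preimage_restrict hf, hindep.measure_inter_preimage_eq_mul _ _
    .of_discrete .of_discrete, ← hξ.2.2 n, Measure.map_apply (hξ.1 n) .of_discrete]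

lemma IsIIDSeq.ae_one_le (hξ : IsIIDSeq P μ ξ) (hμ0 : μ {0} = 0) : ∀ᵐ ω ∂P, ∀ m, 1 ≤ ξ m ω := by
  refine ae_all_iff.mpr fun m => ?_
  have hzero : P (ξ m ⁻¹' {0}) = 0 := by
    rw [← Measure.map_apply (hξ.1 m) (measurableSet_singleton 0), hξ.2.2 m, hμ0]
  filter_upwards [measure_eq_zero_iff_ae_notMem.mp hzero] with ω hω
  exact Nat.one_le_iff_ne_zero.mpr hω

variable {X₀ : Config} {k : ℕ}

lemma IsIIDSeq.tsum_measure_rankProc_eq_mul_le_one [IsProbabilityMeasure P]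
    (hξ : IsIIDSeq P μ ξ) (hμ0 : μ {0} = 0) (hX₀ : BddAbove (support X₀))
    (hk : ∃ j, (k : ℕ∞) ≤ tailSum X₀ j) (ℓ : ℕ) :
    (∑' n, P {ω | rankProc X₀ k (fun i => ξ i ω) n = ℓ}) * μ (Icc 1 ℓ) ≤ 1 := by
  set A : ℕ → Set Ω := fun n => {ω | rankProc X₀ k (fun i => ξ i ω) n = ℓ} ∩ ξ n ⁻¹' Icc 1 ℓ
  have hA : ∀ n, MeasurableSet (A n) := fun n =>
    (measurableSet_setOf_of_dependsOn hξ.1 (dependsOn_rankProc X₀ k n) {(ℓ : ℕ∞)}).inter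
      (hξ.1 n .of_discrete)
  have hcount : ∀ᵐ ω ∂P, ∑' n, (A n).indicator (1 : Ω → ℝ≥0∞) ω ≤ 1 := by
    filter_upwards [hξ.ae_one_le hμ0] with ω hω
    refine le_trans (ENNReal.tsum_le_tsum fun n => ?_)
      (subsingleton_rankProc_eq_and_le hX₀ hω hk ℓ).tsum_indicator_one_le
    by_cases h : ω ∈ A n
    · have hn : n ∈ {n | rankProc X₀ k (fun m => ξ m ω) n = ℓ ∧ ξ n ω ≤ ℓ} := ⟨h.1, h.2.2⟩
      rw [indicator_of_mem h, indicator_of_mem hn, Pi.one_apply, Pi.one_apply]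
    · rw [indicator_of_notMem h]
      exact zero_le
  calc (∑' n, P {ω | rankProc X₀ k (fun i => ξ i ω) n = ℓ}) * μ (Icc 1 ℓ)
      = ∑' n, P (A n) := by
        rw [← ENNReal.tsum_mul_right]
        exact tsum_congr fun n =>
          (hξ.measure_inter_preimage_eq_mul (dependsOn_rankProc X₀ k n) {(ℓ : ℕ∞)} _).symm
    _ = ∫⁻ ω, ∑' n, (A n).indicator (1 : Ω → ℝ≥0∞) ω ∂P := by
        rw [lintegral_tsum fun n => (measurable_one.indicator (hA n)).aemeasurable]
        exact tsum_congr fun n => (lintegral_indicator_one (hA n)).symm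
    _ ≤ ∫⁻ _, 1 ∂P := lintegral_mono_ae hcount
    _ = 1 := by simp

lemma IsIIDSeq.lintegral_totalChildren_le (hξ : IsIIDSeq P μ ξ) (X₀ : Config) (k : ℕ) :
    ∫⁻ ω, totalChildren X₀ k (fun i => ξ i ω) ∂P ≤
      ∑' ℓ : ℕ, (∑' n, P {ω | rankProc X₀ k (fun i => ξ i ω) n = ℓ}) * μ {ℓ} := by
  set A : ℕ → ℕ → Set Ω := fun ℓ n => {ω | rankProc X₀ k (fun i => ξ i ω) n = ℓ} ∩ ξ n ⁻¹' {ℓ}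
  have hA : ∀ ℓ n, MeasurableSet (A ℓ n) := fun ℓ n =>
    (measurableSet_setOf_of_dependsOn hξ.1 (dependsOn_rankProc X₀ k n) {(ℓ : ℕ∞)}).inter
      (hξ.1 n .of_discrete)
  calc ∫⁻ ω, totalChildren X₀ k (fun i => ξ i ω) ∂P
      ≤ ∫⁻ ω, ∑' ℓ, ∑' n, (A ℓ n).indicator 1 ω ∂P := lintegral_mono fun ω =>
        (totalChildren_le_tsum X₀ k _).trans_eq (by simp [A, indicator_apply])
    _ = ∑' ℓ, ∑' n, P (A ℓ n) := by
        rw [lintegral_tsum fun ℓ => (Measurable.tsum fun n =>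
          measurable_one.indicator (hA ℓ n)).aemeasurable]
        refine tsum_congr fun ℓ => ?_
        rw [lintegral_tsum fun n => (measurable_one.indicator (hA ℓ n)).aemeasurable]
        exact tsum_congr fun n => lintegral_indicator_one (hA ℓ n)
    _ = _ := tsum_congr fun ℓ => by
        rw [← ENNReal.tsum_mul_right]
        exact tsum_congr fun n =>
          hξ.measure_inter_preimage_eq_mul (dependsOn_rankProc X₀ k n) {(ℓ : ℕ∞)} _

lemma IsIIDSeq.tsum_measure_rankProc_eq_mul_le [IsProbabilityMeasure P]
    (hξ : IsIIDSeq P μ ξ) (hμ0 : μ {0} = 0) (hX₀ : BddAbove (support X₀))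
    (hk : ∃ j, (k : ℕ∞) ≤ tailSum X₀ j) (ℓ : ℕ) :
    (∑' n, P {ω | rankProc X₀ k (fun i => ξ i ω) n = ℓ}) * μ {ℓ} ≤
      if k ≤ ℓ then μ {ℓ} / μ (Icc 1 ℓ) else 0 := by
  split_ifs with hkℓ
  · exact ENNReal.mul_le_div_of_mul_le_one (hξ.tsum_measure_rankProc_eq_mul_le_one hμ0 hX₀ hk ℓ)
  · have hempty : ∀ n, {ω | rankProc X₀ k (fun i => ξ i ω) n = ℓ} = ∅ := fun n =>
      eq_empty_of_forall_notMem fun ω hω => hkℓ (by exact_mod_cast hω ▸ le_rankProc n)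
    simp [hempty]

end Probability

theorem stmt8_general {Ω : Type*} [MeasurableSpace Ω] (P : Measure Ω) [IsProbabilityMeasure P]
    (μ : Measure ℕ) [IsProbabilityMeasure μ] (hμ0 : μ {0} = 0)
    (ξ : ℕ → Ω → ℕ) (hξ : IsIIDSeq P μ ξ)
    (X₀ : Config) (hX₀ : IsConfig X₀)
    (k : ℕ) (hk : (k : ℕ∞) ≤ ⨆ j : ℤ, tailSum X₀ j) :
    (∫⁻ ω, totalChildren X₀ k (fun i => ξ i ω) ∂P) ≤
        ∑' ℓ : ℕ, (if k ≤ ℓ then μ {ℓ} / μ (Set.Icc 1 ℓ) else 0) ∧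
      ∑' ℓ : ℕ, (if k ≤ ℓ then μ {ℓ} / μ (Set.Icc 1 ℓ) else 0) < ⊤ := by
  have hX : BddAbove (support X₀) := hX₀.2
  have hk' := exists_le_tailSum_of_le_iSup hk
  refine ⟨(hξ.lintegral_totalChildren_le X₀ k).trans
    (ENNReal.tsum_le_tsum fun ℓ => hξ.tsum_measure_rankProc_eq_mul_le hμ0 hX hk' ℓ), ?_⟩
  refine lt_of_le_of_lt (ENNReal.tsum_le_tsum fun ℓ => ?_)
    (tsum_measure_singleton_div_measure_Icc_lt_top μ hμ0)
  split_ifs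
  exacts [le_rfl, zero_le]

/-- If `k ≤ ∑_j X₀(j)` then the expected total number `R_k` of children of
the `k`-th rightmost ball of `X₀` satisfies
`E(R_k) ≤ ∑_{ℓ ≥ k} μ(ℓ)/μ(⟦1,ℓ⟧) < ∞` (with the convention `0/0 = 0`). -/
theorem stmt8 {Ω : Type*} [MeasurableSpace Ω] (P : Measure Ω) [IsProbabilityMeasure P]
    (μ : Measure ℕ) [IsProbabilityMeasure μ] (hμ0 : μ {0} = 0)
    (ξ : ℕ → Ω → ℕ) (hξ : IsIIDSeq P μ ξ)
    (X₀ : Config) (hX₀ : IsConfig X₀)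
    (k : ℕ) (hk1 : 1 ≤ k) (hk : (k : ℕ∞) ≤ ⨆ j : ℤ, tailSum X₀ j) :
    (∫⁻ ω, totalChildren X₀ k (fun i => ξ i ω) ∂P) ≤
        ∑' ℓ : ℕ, (if k ≤ ℓ then μ {ℓ} / μ (Set.Icc 1 ℓ) else 0) ∧
      ∑' ℓ : ℕ, (if k ≤ ℓ then μ {ℓ} / μ (Set.Icc 1 ℓ) else 0) < ⊤ :=
  stmt8_general P μ hμ0 ξ hξ X₀ hX₀ k hk
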